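/- (Noiseless Wigner Distribution Deconvolution, full sampling) Let x, m ∈ ℂ^d and let Y ∈ ℂ^{d×d} have entries Y_{k,ℓ} = |Σ_{n=0}^{d-1} x_n m_{(n-ℓ) mod d} e^{-2πink/d}|^2. Then for each ω ∈ [d]_0, the ω-th column of F_d Y^T F_d^T equals d · (F_d(x ∘ S_ω conj(x))) ∘ R(F_d(m ∘ S_ω conj(m))). -/

import Mathlib

open Complex BigOperators Finset

/-- Discrete Fourier transform on `ℂ^d` (indexed by `ZMod d`). -/
noncomputable def dftV (d : ℕ) [NeZero d] (x : ZMod d → ℂ) : ZMod d → ℂ :=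
  fun k => ∑ n : ZMod d, x n *
    Complex.exp (-2 * Real.pi * Complex.I * (n.val : ℂ) * (k.val : ℂ) / (d : ℂ))

/-- Circular shift: `(S_ℓ x)_n = x_{n+ℓ}`. -/
def shiftV {d : ℕ} (ℓ : ZMod d) (x : ZMod d → ℂ) : ZMod d → ℂ := fun n => x (n + ℓ)

/-- Reversal: `(R x)_n = x_{-n}`. -/
def revV {d : ℕ} (x : ZMod d → ℂ) : ZMod d → ℂ := fun n => x (-n)

/-- Componentwise complex conjugation. -/
def conjV {d : ℕ} (x : ZMod d → ℂ) : ZMod d → ℂ := fun n => (starRingEnd ℂ) (x n)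

/-- Hadamard (componentwise) product. -/
def hadV {d : ℕ} (x y : ZMod d → ℂ) : ZMod d → ℂ := fun n => x n * y n

/-- Circular convolution. -/
noncomputable def convV (d : ℕ) [NeZero d] (x y : ZMod d → ℂ) : ZMod d → ℂ :=
  fun ℓ => ∑ n : ZMod d, x n * y (ℓ - n)

/-- Modulation: `(W_ℓ x)_n = x_n e^{2πiℓn/d}`. -/
noncomputable def modV {d : ℕ} (ℓ : ZMod d) (x : ZMod d → ℂ) : ZMod d → ℂ :=
  fun n => x n * Complex.exp (2 * Real.pi * Complex.I * (ℓ.val : ℂ) * (n.val : ℂ) / (d : ℂ))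

/-- The `d × d` DFT matrix. -/
noncomputable def dftMat (d : ℕ) : Matrix (ZMod d) (ZMod d) ℂ :=
  fun j k => Complex.exp (-2 * Real.pi * Complex.I * (j.val : ℂ) * (k.val : ℂ) / (d : ℂ))

/-!
Column `ℓ` of `Y` is the power spectrum `|𝓕 (x ∘ S_{-ℓ} m)|²`, so its DFT at `ω` is `d` times the
autocorrelation `∑ n, x n m (n - ℓ) conj (x (n + ω) m (n + ω - ℓ))`. As a function of `ℓ` this is
the circular convolution of `x ∘ S_ω conj x` with the reversal of `m ∘ S_ω conj m`, and the
convolution theorem turns its DFT at `α` into `𝓕(x ∘ S_ω conj x)(α) · 𝓕(m ∘ S_ω conj m)(-α)`.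
-/

open scoped ZMod

section Fourier

variable {N : ℕ} [NeZero N]

lemma conj_stdAddChar (a : ZMod N) :
    starRingEnd ℂ (ZMod.stdAddChar a) = ZMod.stdAddChar (-a) := by
  rw [ZMod.stdAddChar_apply, ← Circle.coe_inv_eq_conj, ← AddChar.map_neg_eq_inv]
  rfl

lemma sum_stdAddChar_mul (c : ZMod N) :
    ∑ k : ZMod N, ZMod.stdAddChar (k * c) = if c = 0 then (N : ℂ) else 0 := by
  rw [AddChar.sum_mulShift c (ZMod.isPrimitive_stdAddChar N), ZMod.card, Nat.cast_ite,
    Nat.cast_zero]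

lemma dft_convV (a c : ZMod N → ℂ) (α : ZMod N) :
    𝓕 (convV N a c) α = 𝓕 a α * 𝓕 c α := by
  simp only [ZMod.dft_apply, convV, smul_eq_mul]
  rw [Finset.sum_mul_sum]
  simp only [Finset.mul_sum]
  rw [Finset.sum_comm]
  refine Finset.sum_congr rfl fun n _ => Fintype.sum_equiv (Equiv.subRight n) _ _ fun ℓ => ?_
  rw [Equiv.subRight_apply, show -(ℓ * α) = -(n * α) + -((ℓ - n) * α) by ring,
    AddChar.map_add_eq_mul]
  ring

lemma dft_revV (x : ZMod N → ℂ) : 𝓕 (revV x) = revV (𝓕 x) :=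
  ZMod.dft_comp_neg x

lemma dft_norm_sq_dft (z : ZMod N → ℂ) (ω : ZMod N) :
    𝓕 (fun k => (‖𝓕 z k‖ : ℂ) ^ 2) ω = N * ∑ n, z n * starRingEnd ℂ (z (n + ω)) := by
  calc 𝓕 (fun k => (‖𝓕 z k‖ : ℂ) ^ 2) ω
      = ∑ n, ∑ n', z n * starRingEnd ℂ (z n') *
          ∑ k, ZMod.stdAddChar (k * (n' - n - ω)) := by
        simp only [← Complex.mul_conj', ZMod.dft_apply, smul_eq_mul, map_sum, map_mul,
          conj_stdAddChar, neg_neg]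
        simp_rw [Finset.sum_mul_sum, Finset.mul_sum]
        rw [Finset.sum_comm]
        refine Finset.sum_congr rfl fun n _ => ?_
        rw [Finset.sum_comm]
        refine Finset.sum_congr rfl fun n' _ => Finset.sum_congr rfl fun k _ => ?_
        rw [show k * (n' - n - ω) = -(k * ω) + -(n * k) + n' * k by ring,
          AddChar.map_add_eq_mul, AddChar.map_add_eq_mul]
        ring
    _ = ∑ n, z n * starRingEnd ℂ (z (n + ω)) * N := by
        refine Finset.sum_congr rfl fun n _ => ?_
        simp only [sum_stdAddChar_mul, sub_sub, sub_eq_zero, mul_ite, mul_zero,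
          Finset.sum_ite_eq', Finset.mem_univ, if_true]
    _ = _ := by rw [← Finset.sum_mul, mul_comm]

end Fourier

section DFTMatrix

variable (d : ℕ) [NeZero d]

lemma dftMat_apply (j k : ZMod d) : dftMat d j k = ZMod.stdAddChar (-(j * k)) := by
  have hjk : -(j * k) = ((-(j.val * k.val : ℤ) : ℤ) : ZMod d) := by
    push_cast [ZMod.intCast_cast, ZMod.natCast_val, ZMod.cast_id]
    rfl
  rw [hjk, ZMod.stdAddChar_coe, dftMat]
  push_cast
  ring_nf

lemma dftV_eq_dft (x : ZMod d → ℂ) : dftV d x = 𝓕 x := by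
  funext k
  simp only [dftV, ZMod.dft_apply, smul_eq_mul, ← dftMat_apply]
  exact Finset.sum_congr rfl fun n _ => mul_comm _ _

lemma dftMat_mul_mul_transpose_apply (A : Matrix (ZMod d) (ZMod d) ℂ) (α ω : ZMod d) :
    (dftMat d * A * (dftMat d).transpose) α ω = 𝓕 (fun ℓ => 𝓕 (A ℓ) ω) α := by
  simp only [Matrix.mul_apply, Matrix.transpose_apply, ZMod.dft_apply, smul_eq_mul,
    dftMat_apply, Finset.sum_mul, Finset.mul_sum]
  rw [Finset.sum_comm]
  refine Finset.sum_congr rfl fun ℓ _ => Finset.sum_congr rfl fun k _ => ?_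
  ring_nf

end DFTMatrix

/-- noiseless Wigner distribution deconvolution, full sampling. -/
theorem wdd_full (d : ℕ) [NeZero d] (x m : ZMod d → ℂ)
    (Y : Matrix (ZMod d) (ZMod d) ℂ)
    (hY : ∀ k ℓ : ZMod d, Y k ℓ =
      ((‖(∑ n : ZMod d, x n * m (n - ℓ) *
        Complex.exp (-2 * Real.pi * Complex.I * (n.val : ℂ) * (k.val : ℂ) / (d : ℂ)))‖) ^ 2 : ℂ)) :
    ∀ ω α : ZMod d,
      (dftMat d * Y.transpose * (dftMat d).transpose) α ω =
        (d : ℂ) * (dftV d (hadV x (shiftV ω (conjV x))) α *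
          revV (dftV d (hadV m (shiftV ω (conjV m)))) α) := by
  intro ω α
  set a := hadV x (shiftV ω (conjV x))
  set b := hadV m (shiftV ω (conjV m))
  have hcol : ∀ ℓ, 𝓕 (Y.transpose ℓ) ω = d * convV d a (revV b) ℓ := by
    intro ℓ
    have hYℓ : Y.transpose ℓ = fun k => (‖𝓕 (fun n => x n * m (n - ℓ)) k‖ : ℂ) ^ 2 := by
      funext k
      rw [Matrix.transpose_apply, hY, ← dftV_eq_dft]
      rfl
    rw [hYℓ, dft_norm_sq_dft]
    congr 1
    refine Finset.sum_congr rfl fun n _ => ?_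
    simp only [a, b, hadV, shiftV, conjV, revV, map_mul]
    rw [show -(ℓ - n) + ω = n + ω - ℓ by ring, neg_sub]
    ring
  calc (dftMat d * Y.transpose * (dftMat d).transpose) α ω
      = 𝓕 (fun ℓ => d * convV d a (revV b) ℓ) α := by
        rw [dftMat_mul_mul_transpose_apply, funext hcol]
    _ = d * (𝓕 a α * revV (𝓕 b) α) := by
        simp only [ZMod.dft_const_mul, dft_convV, dft_revV]
    _ = _ := by rw [dftV_eq_dft, dftV_eq_dft]
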